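/- Consider the controlled system ẋ = f(x,u), f C². Suppose there exists a C² map φ : ℝⁿ → ℝᴺ with full-rank Jacobian Φ(x) = Dφ(x) and matrices A ∈ ℝ^{N×N}, B ∈ ℝ^{N×m} with Φ(x) f(x,u) = A φ(x) + B u for all x, u. If the pair (A,B) is stabilisable, i.e., there exist P = Pᵀ ≻ 0 and K̄ ∈ ℝ^{m×N} with P(A + BK̄) + (A + BK̄)ᵀ P ≺ 0, then M(x) := Φ(x)ᵀ P Φ(x) and K(x) := K̄ Φ(x) satisfy the strong control contraction metric inequality: Ṁ + MF + FᵀM + MGK + (GK)ᵀM ≺ 0 evaluated along trajectories of the closed-loop system u = K̄φ(x), where F = ∂f/∂x(x, K̄φ(x)) and G = ∂f/∂u(x, K̄φ(x)). -/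

import Mathlib

/-!
Differentiating the Koopman identity `Φ(y) f(y,u) = A φ(y) + B u` in `u` gives `Φ G = B`;
differentiating it in `y` at `u = K̄ φ(x)`, using the symmetry of the second derivative of `φ`,
gives `Φ̇ + Φ F = A Φ`, where `Φ̇` is the derivative of `Φ` along `f`. Since
`Ṁ = Φ̇ᵀ P Φ + Φᵀ P Φ̇`, these two identities collapse the CCM expression to
`Φᵀ (P (A + B K̄) + (A + B K̄)ᵀ P) Φ`, which is negative definite because `Φ` has full column rank.
-/

open Matrix MeasureTheory

/-- Jacobian matrix of a map between finite-dimensional spaces. -/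
noncomputable def jac {n N : ℕ} (φ : (Fin n → ℝ) → (Fin N → ℝ)) (x : Fin n → ℝ) :
    Matrix (Fin N) (Fin n) ℝ :=
  Matrix.of fun i j => fderiv ℝ φ x (Pi.single j 1) i

/-- A real square matrix is Hurwitz if all its (complex) eigenvalues have
negative real part. -/
def Hurwitz {N : ℕ} (A : Matrix (Fin N) (Fin N) ℝ) : Prop :=
  ∀ μ ∈ spectrum ℂ (A.map (Complex.ofReal ·)), μ.re < 0

/-- Euclidean norm on `Fin n → ℝ`. -/
noncomputable def euclNorm {n : ℕ} (x : Fin n → ℝ) : ℝ :=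
  Real.sqrt (∑ i, x i ^ 2)

theorem Matrix.mulVec_injective_of_rank_eq {K m n : Type*} [Field K] [Fintype n]
    {A : Matrix m n K} (h : A.rank = Fintype.card n) :
    Function.Injective A.mulVec := by
  have hdim := LinearMap.finrank_range_add_finrank_ker A.mulVecLin
  rw [← Matrix.rank, h, Module.finrank_fintype_fun_eq_card] at hdim
  have hker : LinearMap.ker A.mulVecLin = ⊥ := Submodule.finrank_eq_zero.mp (by omega)
  exact LinearMap.ker_eq_bot.mp hker

theorem Matrix.PosDef.transpose_mul_mul_same {n m : Type*} [Fintype n] [Fintype m]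
    {A : Matrix n n ℝ} {B : Matrix n m ℝ} (hA : A.PosDef) (hB : Function.Injective B.mulVec) :
    (Bᵀ * A * B).PosDef := by
  simpa only [conjTranspose_eq_transpose_of_trivial] using hA.conjTranspose_mul_mul_same hB

theorem ccm_expr_eq_conj_lyapunov {R n N m : Type*} [CommRing R] [Fintype n] [Fintype N]
    [Fintype m] {Φ D : Matrix N n R} {F : Matrix n n R} {G : Matrix n m R} {A : Matrix N N R}
    {B : Matrix N m R} (P : Matrix N N R) (Kbar : Matrix m N R) (hG : Φ * G = B)
    (hF : D + Φ * F = A * Φ) :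
    Dᵀ * P * Φ + Φᵀ * P * D + Φᵀ * P * Φ * F + Fᵀ * (Φᵀ * P * Φ) +
        Φᵀ * P * Φ * (G * (Kbar * Φ)) + (G * (Kbar * Φ))ᵀ * (Φᵀ * P * Φ) =
      Φᵀ * (P * (A + B * Kbar) + (A + B * Kbar)ᵀ * P) * Φ := by
  calc _ = (D + Φ * F)ᵀ * P * Φ + Φᵀ * P * (D + Φ * F) + Φᵀ * P * ((Φ * G) * Kbar * Φ) +
        ((Φ * G) * Kbar * Φ)ᵀ * P * Φ := by
        simp only [transpose_add, transpose_mul, Matrix.add_mul, Matrix.mul_add, Matrix.mul_assoc]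
        abel
    _ = _ := by
        rw [hF, hG]
        simp only [transpose_add, transpose_mul, Matrix.add_mul, Matrix.mul_add, Matrix.mul_assoc]
        abel

section DirDeriv

variable {E : Type*} [NormedAddCommGroup E] [NormedSpace ℝ E] {l m n : Type*}

-- `dirDeriv M x (f x u)` is the paper's `Ṁ` along `ẋ = f x u`.
noncomputable def dirDeriv (X : E → Matrix m n ℝ) (x v : E) : Matrix m n ℝ :=
  Matrix.of fun i j => fderiv ℝ (fun y => X y i j) x v

theorem dirDeriv_const (C : Matrix m n ℝ) (x v : E) : dirDeriv (fun _ => C) x v = 0 := by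
  ext i j
  simp [dirDeriv]

theorem dirDeriv_transpose (X : E → Matrix m n ℝ) (x v : E) :
    dirDeriv (fun y => (X y)ᵀ) x v = (dirDeriv X x v)ᵀ :=
  rfl

variable [Fintype n] {X : E → Matrix l n ℝ} {Y : E → Matrix n m ℝ} {x : E}

theorem differentiableAt_mul_apply (hX : ∀ i j, DifferentiableAt ℝ (fun y => X y i j) x)
    (hY : ∀ i j, DifferentiableAt ℝ (fun y => Y y i j) x) (i : l) (j : m) :
    DifferentiableAt ℝ (fun y => (X y * Y y) i j) x := by
  simp only [mul_apply]
  fun_prop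

theorem dirDeriv_mul (hX : ∀ i j, DifferentiableAt ℝ (fun y => X y i j) x)
    (hY : ∀ i j, DifferentiableAt ℝ (fun y => Y y i j) x) (v : E) :
    dirDeriv (fun y => X y * Y y) x v = dirDeriv X x v * Y x + X x * dirDeriv Y x v := by
  ext i j
  have hprod : HasFDerivAt (fun y => ∑ k, X y i k * Y y k j)
      (∑ k, (X x i k • fderiv ℝ (fun y => Y y k j) x + Y x k j • fderiv ℝ (fun y => X y i k) x))
      x :=
    HasFDerivAt.fun_sum fun k _ => (hX i k).hasFDerivAt.mul (hY k j).hasFDerivAt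
  simp only [dirDeriv, of_apply, mul_apply, Matrix.add_apply, hprod.fderiv]
  simp [Finset.sum_add_distrib, mul_comm, add_comm]

end DirDeriv

theorem dirDeriv_transpose_mul_mul_self {E m n : Type*} [NormedAddCommGroup E] [NormedSpace ℝ E]
    [Fintype m] {X : E → Matrix m n ℝ} {x : E} (P : Matrix m m ℝ)
    (hX : ∀ i j, DifferentiableAt ℝ (fun y => X y i j) x) (v : E) :
    dirDeriv (fun y => (X y)ᵀ * P * X y) x v =
      (dirDeriv X x v)ᵀ * P * X x + (X x)ᵀ * P * dirDeriv X x v := by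
  have hXt : ∀ i j, DifferentiableAt ℝ (fun y => (X y)ᵀ i j) x := fun i j => hX j i
  have hP : ∀ i j, DifferentiableAt ℝ (fun _ : E => P i j) x := fun i j => differentiableAt_const _
  rw [dirDeriv_mul (differentiableAt_mul_apply hXt hP) hX, dirDeriv_mul hXt hP,
    dirDeriv_transpose, dirDeriv_const, Matrix.mul_zero, add_zero]

section Jacobian

variable {n N : ℕ} {ψ : (Fin n → ℝ) → (Fin N → ℝ)} {x : Fin n → ℝ}

theorem jac_eq_toMatrix' (ψ : (Fin n → ℝ) → (Fin N → ℝ)) (x : Fin n → ℝ) :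
    jac ψ x = LinearMap.toMatrix' (fderiv ℝ ψ x : (Fin n → ℝ) →ₗ[ℝ] Fin N → ℝ) :=
  rfl

theorem jac_mulVec (ψ : (Fin n → ℝ) → (Fin N → ℝ)) (x v : Fin n → ℝ) :
    jac ψ x *ᵥ v = fderiv ℝ ψ x v :=
  LinearMap.toMatrix'_mulVec _ v

theorem jac_id (x : Fin n → ℝ) : jac (fun y => y) x = 1 := by
  rw [jac_eq_toMatrix', fderiv_fun_id]
  exact LinearMap.toMatrix'_id

theorem jac_add_const (c : Fin N → ℝ) :
    jac (fun y => ψ y + c) x = jac ψ x := by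
  rw [jac_eq_toMatrix', fderiv_add_const, jac_eq_toMatrix']

theorem jac_const_add (c : Fin N → ℝ) :
    jac (fun y => c + ψ y) x = jac ψ x := by
  rw [jac_eq_toMatrix', fderiv_const_add, jac_eq_toMatrix']

theorem jac_const_mulVec {k : ℕ} (C : Matrix (Fin k) (Fin N) ℝ) (hψ : DifferentiableAt ℝ ψ x) :
    jac (fun y => C *ᵥ ψ y) x = C * jac ψ x := by
  have hC : HasFDerivAt (fun y => C *ᵥ ψ y)
      ((LinearMap.toContinuousLinearMap (Matrix.toLin' C)).comp (fderiv ℝ ψ x)) x :=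
    (LinearMap.toContinuousLinearMap (Matrix.toLin' C)).hasFDerivAt.comp x hψ.hasFDerivAt
  rw [jac_eq_toMatrix', hC.fderiv, ContinuousLinearMap.toLinearMap_comp, LinearMap.toMatrix'_comp,
    LinearMap.coe_toContinuousLinearMap, LinearMap.toMatrix'_toLin', jac_eq_toMatrix']

theorem jac_matrix_mulVec {k : ℕ} (C : Matrix (Fin k) (Fin n) ℝ) (x : Fin n → ℝ) :
    jac (fun v => C *ᵥ v) x = C := by
  rw [jac_const_mulVec C differentiableAt_fun_id, jac_id, Matrix.mul_one]

theorem differentiableAt_jac_apply (hψ : DifferentiableAt ℝ (fderiv ℝ ψ) x) (i : Fin N)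
    (j : Fin n) : DifferentiableAt ℝ (fun y => jac ψ y i j) x := by
  simp only [jac, of_apply]
  fun_prop

theorem dirDeriv_jac (hψ : DifferentiableAt ℝ (fderiv ℝ ψ) x) (v : Fin n → ℝ) :
    dirDeriv (jac ψ) x v =
      LinearMap.toMatrix' (fderiv ℝ (fderiv ℝ ψ) x v : (Fin n → ℝ) →ₗ[ℝ] Fin N → ℝ) := by
  ext i j
  let L : ((Fin n → ℝ) →L[ℝ] Fin N → ℝ) →L[ℝ] ℝ :=
    (ContinuousLinearMap.proj (R := ℝ) (φ := fun _ : Fin N => ℝ) i).comp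
      (ContinuousLinearMap.apply ℝ _ (Pi.single j 1))
  exact congrArg (· v) (L.hasFDerivAt.comp x hψ.hasFDerivAt).fderiv

theorem jac_fderiv_apply (hψ : ContDiffAt ℝ 2 ψ x) {g : (Fin n → ℝ) → (Fin n → ℝ)}
    (hg : DifferentiableAt ℝ g x) :
    jac (fun y => fderiv ℝ ψ y (g y)) x = dirDeriv (jac ψ) x (g x) + jac ψ x * jac g x := by
  have hψ' : DifferentiableAt ℝ (fderiv ℝ ψ) x :=
    (hψ.fderiv_right le_rfl).differentiableAt one_ne_zero
  have hsymm : IsSymmSndFDerivAt ℝ ψ x := hψ.isSymmSndFDerivAt (by simp)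
  rw [jac_eq_toMatrix', fderiv_clm_apply hψ' hg, dirDeriv_jac hψ',
    ContinuousLinearMap.toLinearMap_add, map_add, ContinuousLinearMap.toLinearMap_comp,
    LinearMap.toMatrix'_comp, add_comm]
  exact congrArg (fun L : (Fin n → ℝ) →L[ℝ] Fin N → ℝ =>
      LinearMap.toMatrix' (L : (Fin n → ℝ) →ₗ[ℝ] Fin N → ℝ) + _)
    (ContinuousLinearMap.ext fun w => hsymm w (g x))

end Jacobian

-- The Koopman PDE: `z = φ x` obeys the linear dynamics `ż = A z + B u` along `ẋ = f x u`.
def IsKoopmanLinearization {n N m : ℕ} (f : (Fin n → ℝ) → (Fin m → ℝ) → (Fin n → ℝ))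
    (φ : (Fin n → ℝ) → (Fin N → ℝ)) (A : Matrix (Fin N) (Fin N) ℝ)
    (B : Matrix (Fin N) (Fin m) ℝ) : Prop :=
  ∀ x u, jac φ x *ᵥ f x u = A *ᵥ φ x + B *ᵥ u

namespace IsKoopmanLinearization

variable {n N m : ℕ} {f : (Fin n → ℝ) → (Fin m → ℝ) → (Fin n → ℝ)}
  {φ : (Fin n → ℝ) → (Fin N → ℝ)} {A : Matrix (Fin N) (Fin N) ℝ} {B : Matrix (Fin N) (Fin m) ℝ}
  {x : Fin n → ℝ} {u : Fin m → ℝ}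

theorem jac_mul_jac_input (h : IsKoopmanLinearization f φ A B)
    (hf : DifferentiableAt ℝ (fun v => f x v) u) :
    jac φ x * jac (fun v => f x v) u = B := by
  have hu := congrArg (jac · u) (funext (h x))
  rwa [jac_const_mulVec _ hf, jac_const_add, jac_matrix_mulVec] at hu

theorem dirDeriv_jac_add_jac_mul_jac_state (h : IsKoopmanLinearization f φ A B)
    (hφ : ContDiffAt ℝ 2 φ x) (hf : DifferentiableAt ℝ (fun y => f y u) x) :
    dirDeriv (jac φ) x (f x u) + jac φ x * jac (fun y => f y u) x = A * jac φ x := by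
  have hx := congrArg (jac · x) (funext fun y => (jac_mulVec φ y (f y u)).symm.trans (h y u))
  rwa [jac_fderiv_apply hφ hf, jac_add_const,
    jac_const_mulVec _ (hφ.differentiableAt two_ne_zero)] at hx

end IsKoopmanLinearization

theorem koopman_implies_CCM_general
    {n N m : ℕ}
    (f : (Fin n → ℝ) → (Fin m → ℝ) → (Fin n → ℝ))
    (hf : ContDiff ℝ 2 (fun p : (Fin n → ℝ) × (Fin m → ℝ) => f p.1 p.2))
    (φ : (Fin n → ℝ) → (Fin N → ℝ)) (hφ : ContDiff ℝ 2 φ)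
    (hrank : ∀ x, (jac φ x).rank = n)
    (A : Matrix (Fin N) (Fin N) ℝ) (B : Matrix (Fin N) (Fin m) ℝ)
    (hPDE : ∀ x u, (jac φ x).mulVec (f x u) = A.mulVec (φ x) + B.mulVec u)
    (P : Matrix (Fin N) (Fin N) ℝ)
    (Kbar : Matrix (Fin m) (Fin N) ℝ)
    (hstab : (-(P * (A + B * Kbar) + (A + B * Kbar)ᵀ * P)).PosDef)
    (M : (Fin n → ℝ) → Matrix (Fin n) (Fin n) ℝ)
    (hM : ∀ x, M x = (jac φ x)ᵀ * P * jac φ x)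
    (K : (Fin n → ℝ) → Matrix (Fin m) (Fin n) ℝ)
    (hK : ∀ x, K x = Kbar * jac φ x) :
    ∀ x,
      (-(((Matrix.of fun i j =>
            fderiv ℝ (fun y => M y i j) x (f x (Kbar.mulVec (φ x))))) +
          M x * jac (fun y => f y (Kbar.mulVec (φ x))) x +
          (jac (fun y => f y (Kbar.mulVec (φ x))) x)ᵀ * M x +
          M x * (jac (fun v => f x v) (Kbar.mulVec (φ x)) * K x) +
          (jac (fun v => f x v) (Kbar.mulVec (φ x)) * K x)ᵀ * M x)).PosDef := by
  intro x
  set u₀ := Kbar *ᵥ φ x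
  have hf' := hf.differentiable two_ne_zero
  have hfx : DifferentiableAt ℝ (fun v => f x v) u₀ :=
    (hf'.comp ((differentiable_const x).prodMk differentiable_id)).differentiableAt
  have hfu : DifferentiableAt ℝ (fun y => f y u₀) x :=
    (hf'.comp (differentiable_id.prodMk (differentiable_const u₀))).differentiableAt
  have hφ' : DifferentiableAt ℝ (fderiv ℝ φ) x :=
    (hφ.fderiv_right le_rfl).differentiable one_ne_zero x
  have hMdot : dirDeriv M x (f x u₀) = (dirDeriv (jac φ) x (f x u₀))ᵀ * P * jac φ x +
      (jac φ x)ᵀ * P * dirDeriv (jac φ) x (f x u₀) := by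
    rw [funext hM]
    exact dirDeriv_transpose_mul_mul_self P (differentiableAt_jac_apply hφ') _
  change (-(dirDeriv M x (f x u₀) + _ + _ + _ + _)).PosDef
  rw [hMdot, hM x, hK x, ccm_expr_eq_conj_lyapunov P Kbar
    (IsKoopmanLinearization.jac_mul_jac_input hPDE hfx)
    (IsKoopmanLinearization.dirDeriv_jac_add_jac_mul_jac_state hPDE hφ.contDiffAt hfu),
    ← Matrix.neg_mul, ← Matrix.mul_neg]
  exact hstab.transpose_mul_mul_same (Matrix.mulVec_injective_of_rank_eq (by simpa using hrank x))

/-- a Koopman mapping linearising the controlled dynamics with a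
stabilisable pair `(A,B)` yields a strong control contraction metric
`M(x) = ΦᵀPΦ` with differential gain `K(x) = K̄Φ(x)`. -/
theorem koopman_implies_CCM
    {n N m : ℕ}
    (f : (Fin n → ℝ) → (Fin m → ℝ) → (Fin n → ℝ))
    (hf : ContDiff ℝ 2 (fun p : (Fin n → ℝ) × (Fin m → ℝ) => f p.1 p.2))
    (φ : (Fin n → ℝ) → (Fin N → ℝ)) (hφ : ContDiff ℝ 2 φ)
    (hrank : ∀ x, (jac φ x).rank = n)
    (A : Matrix (Fin N) (Fin N) ℝ) (B : Matrix (Fin N) (Fin m) ℝ)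
    (hPDE : ∀ x u, (jac φ x).mulVec (f x u) = A.mulVec (φ x) + B.mulVec u)
    (P : Matrix (Fin N) (Fin N) ℝ) (hPsym : Pᵀ = P) (hPpos : P.PosDef)
    (Kbar : Matrix (Fin m) (Fin N) ℝ)
    (hstab : (-(P * (A + B * Kbar) + (A + B * Kbar)ᵀ * P)).PosDef)
    (M : (Fin n → ℝ) → Matrix (Fin n) (Fin n) ℝ)
    (hM : ∀ x, M x = (jac φ x)ᵀ * P * jac φ x)
    (K : (Fin n → ℝ) → Matrix (Fin m) (Fin n) ℝ)
    (hK : ∀ x, K x = Kbar * jac φ x) :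
    ∀ x,
      (-(((Matrix.of fun i j =>
            fderiv ℝ (fun y => M y i j) x (f x (Kbar.mulVec (φ x))))) +
          M x * jac (fun y => f y (Kbar.mulVec (φ x))) x +
          (jac (fun y => f y (Kbar.mulVec (φ x))) x)ᵀ * M x +
          M x * (jac (fun v => f x v) (Kbar.mulVec (φ x)) * K x) +
          (jac (fun v => f x v) (Kbar.mulVec (φ x)) * K x)ᵀ * M x)).PosDef :=
  koopman_implies_CCM_general f hf φ hφ hrank A B hPDE P Kbar hstab M hM K hK
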